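/- The standard normal cumulative distribution function Φ is log-concave on ℝ, i.e., the function t ↦ log Φ(t) is concave. -/

import Mathlib

noncomputable def phi (t : ℝ) : ℝ := (Real.sqrt (2 * Real.pi))⁻¹ * Real.exp (-t ^ 2 / 2)

noncomputable def Phi (t : ℝ) : ℝ := ∫ u in Set.Iic t, phi u

noncomputable def millsR (t : ℝ) : ℝ := phi t / Phi t

/-!
The derivative of `log Φ` is the Mills ratio `φ / Φ`, whose derivative is `-(φ / Φ) (t + φ / Φ)`
since `φ' = -t φ`. So `log Φ` is concave as soon as `t Φ(t) + φ(t) ≥ 0`, and this quantity is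
`∫_{u ≤ t} (t - u) φ(u) du`, the integral of a nonnegative function, because `∫_{u ≤ t} u φ(u) du
= -φ(t)`.
-/

open MeasureTheory Real Set Filter Topology

theorem hasDerivAt_setIntegral_Iic {E : Type*} [NormedAddCommGroup E] [NormedSpace ℝ E]
    [CompleteSpace E] {f : ℝ → E} (hf : Continuous f) (hfi : Integrable f) (t : ℝ) :
    HasDerivAt (fun s => ∫ u in Iic s, f u) (f t) t := by
  have hsplit :
      (fun s => ∫ u in Iic s, f u) = fun s => (∫ u in Iic 0, f u) + ∫ u in 0..s, f u := by
    funext s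
    rw [← intervalIntegral.integral_Iic_sub_Iic hfi.integrableOn hfi.integrableOn]
    abel
  rw [hsplit]
  exact (intervalIntegral.integral_hasDerivAt_right hfi.intervalIntegrable
    (hf.stronglyMeasurableAtFilter _ _) hf.continuousAt).const_add _

theorem phi_eq_gaussianPDFReal : phi = ProbabilityTheory.gaussianPDFReal 0 1 := by
  funext t
  simp [phi, ProbabilityTheory.gaussianPDFReal]

theorem phi_pos (t : ℝ) : 0 < phi t := by
  rw [phi_eq_gaussianPDFReal]
  exact ProbabilityTheory.gaussianPDFReal_pos _ _ _ one_ne_zero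

theorem continuous_phi : Continuous phi := by
  unfold phi
  fun_prop

theorem integrable_phi : Integrable phi :=
  phi_eq_gaussianPDFReal ▸ ProbabilityTheory.integrable_gaussianPDFReal 0 1

theorem integrable_mul_phi : Integrable (fun u => u * phi u) := by
  have h := (integrable_mul_exp_neg_mul_sq (b := 1 / 2) (by norm_num)).const_mul
    (√(2 * π))⁻¹
  refine h.congr (ae_of_all _ fun u => ?_)
  simp only [phi]
  ring_nf

theorem hasDerivAt_phi (t : ℝ) : HasDerivAt phi (-t * phi t) t := by
  have hexponent : HasDerivAt (fun u : ℝ => -u ^ 2 / 2) (-t) t :=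
    (((hasDerivAt_pow 2 t).fun_neg).div_const 2).congr_deriv (by ring)
  exact (hexponent.exp.const_mul (√(2 * π))⁻¹).congr_deriv (by rw [phi]; ring)

theorem tendsto_phi_atBot : Tendsto phi atBot (𝓝 0) :=
  tendsto_zero_of_hasDerivAt_of_integrableOn_Iic (a := 0) (fun t _ => hasDerivAt_phi t)
    (by simpa only [neg_mul] using integrable_mul_phi.fun_neg.integrableOn)
    integrable_phi.integrableOn

theorem setIntegral_Iic_mul_phi (t : ℝ) : ∫ u in Iic t, u * phi u = -phi t := by
  have hderiv : ∀ u ∈ Iic t, HasDerivAt (fun s => -phi s) (u * phi u) u := fun u _ => by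
    simpa only [neg_mul, neg_neg] using (hasDerivAt_phi u).fun_neg
  simpa using integral_Iic_of_hasDerivAt_of_tendsto' hderiv integrable_mul_phi.integrableOn
    tendsto_phi_atBot.neg

theorem hasDerivAt_Phi (t : ℝ) : HasDerivAt Phi (phi t) t :=
  hasDerivAt_setIntegral_Iic continuous_phi integrable_phi t

theorem Phi_pos (t : ℝ) : 0 < Phi t := by
  rw [Phi, setIntegral_pos_iff_support_of_nonneg_ae (ae_of_all _ fun u => (phi_pos u).le)
    integrable_phi.integrableOn, Function.support_eq_univ fun u => (phi_pos u).ne', univ_inter]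
  simp

theorem mul_Phi_add_phi_eq_setIntegral (t : ℝ) :
    t * Phi t + phi t = ∫ u in Iic t, (t - u) * phi u := by
  simp only [sub_mul]
  rw [integral_sub (integrable_phi.const_mul t).integrableOn integrable_mul_phi.integrableOn,
    integral_const_mul, setIntegral_Iic_mul_phi, Phi]
  ring

theorem mul_Phi_add_phi_nonneg (t : ℝ) : 0 ≤ t * Phi t + phi t := by
  rw [mul_Phi_add_phi_eq_setIntegral]
  exact setIntegral_nonneg measurableSet_Iic fun u hu =>
    mul_nonneg (sub_nonneg.2 hu) (phi_pos u).le

theorem add_millsR_nonneg (t : ℝ) : 0 ≤ t + millsR t := by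
  have hPhi := Phi_pos t
  have hsum : t + millsR t = (t * Phi t + phi t) / Phi t := by
    unfold millsR
    field_simp
  rw [hsum]
  exact div_nonneg (mul_Phi_add_phi_nonneg t) hPhi.le

theorem hasDerivAt_log_Phi (t : ℝ) : HasDerivAt (fun s => log (Phi s)) (millsR t) t :=
  (hasDerivAt_Phi t).log (Phi_pos t).ne'

theorem hasDerivAt_millsR (t : ℝ) : HasDerivAt millsR (-millsR t * (t + millsR t)) t := by
  have hPhi := Phi_pos t
  refine ((hasDerivAt_phi t).div (hasDerivAt_Phi t) hPhi.ne').congr_deriv ?_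
  unfold millsR
  field_simp
  ring

theorem antitone_millsR : Antitone millsR :=
  antitone_of_deriv_nonpos (fun t => (hasDerivAt_millsR t).differentiableAt) fun t => by
    rw [(hasDerivAt_millsR t).deriv, neg_mul]
    have hmillsR : 0 ≤ millsR t := div_nonneg (phi_pos t).le (Phi_pos t).le
    exact neg_nonpos.2 (mul_nonneg hmillsR (add_millsR_nonneg t))

/-- The standard normal CDF is log-concave on `ℝ`. -/
theorem logConcave_Phi : ConcaveOn ℝ Set.univ (fun t => Real.log (Phi t)) := by
  have hderiv : deriv (fun t => log (Phi t)) = millsR :=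
    funext fun t => (hasDerivAt_log_Phi t).deriv
  exact Antitone.concaveOn_univ_of_deriv (fun t => (hasDerivAt_log_Phi t).differentiableAt)
    (hderiv ▸ antitone_millsR)
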